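/- Let D ⊂ ℝ² be a domain, A ≥ 1, and let γ₁, γ₂ be curves in D with a common endpoint x₀ such that dist(x₀, ∂D) ≥ A⁻¹·min{d(γ₁), d(γ₂)} and cig_d(γᵢ, A) ⊂ D for i = 1,2. Then the concatenation γ of γ₁ and γ₂ at x₀ satisfies cig_d(γ, (2A+1)A) ⊂ D, where d denotes diameter. The analogous statement holds with length ℓ in place of diameter d. -/

import Mathlib

open Set Metric Filter Topology
open scoped ENNReal

noncomputable section

/-- `S` is a connected component of the complement of `Ω`. -/
def IsComplComponent (Ω S : Set ℂ) : Prop := ∃ z ∈ Ωᶜ, S = connectedComponentIn Ωᶜ z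

/-- The inner length metric `λ_Ω`: infimum of lengths of curves in `Ω` joining the points. -/
def innerLen (Ω : Set ℂ) (a b : ℂ) : ℝ≥0∞ :=
  ⨅ γ : {γ : ℝ → ℂ // ContinuousOn γ (Set.Icc 0 1) ∧ Set.MapsTo γ (Set.Icc 0 1) Ω ∧
      γ 0 = a ∧ γ 1 = b}, eVariationOn γ.1 (Set.Icc 0 1)

/-- The inner diameter metric `ρ_Ω`: infimum of diameters of curves in `Ω` joining the points. -/
def innerDiam (Ω : Set ℂ) (a b : ℂ) : ℝ≥0∞ :=
  ⨅ γ : {γ : ℝ → ℂ // ContinuousOn γ (Set.Icc 0 1) ∧ Set.MapsTo γ (Set.Icc 0 1) Ω ∧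
      γ 0 = a ∧ γ 1 = b}, EMetric.diam (γ.1 '' Set.Icc 0 1)

/-- An inner `A`-uniform curve (length version) in `Ω`. -/
def IsInnerUniformCurve (A : ℝ) (Ω : Set ℂ) (γ : ℝ → ℂ) : Prop :=
  ContinuousOn γ (Set.Icc 0 1) ∧ Set.MapsTo γ (Set.Icc 0 1) Ω ∧
  eVariationOn γ (Set.Icc 0 1) ≤ ENNReal.ofReal A * innerLen Ω (γ 0) (γ 1) ∧
  ∀ t ∈ Set.Icc (0:ℝ) 1,
    min (eVariationOn γ (Set.Icc 0 t)) (eVariationOn γ (Set.Icc t 1))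
      ≤ ENNReal.ofReal (A * Metric.infDist (γ t) (frontier Ω))

/-- An inner `A`-uniform domain in the plane. -/
def IsInnerUniformDomain (A : ℝ) (Ω : Set ℂ) : Prop :=
  IsOpen Ω ∧ IsConnected Ω ∧
  ∀ a ∈ Ω, ∀ b ∈ Ω, ∃ γ : ℝ → ℂ, IsInnerUniformCurve A Ω γ ∧ γ 0 = a ∧ γ 1 = b

/-- An `A`-uniform curve in `Ω`. -/
def IsUniformCurve (A : ℝ) (Ω : Set ℂ) (γ : ℝ → ℂ) : Prop :=
  ContinuousOn γ (Set.Icc 0 1) ∧ Set.MapsTo γ (Set.Icc 0 1) Ω ∧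
  eVariationOn γ (Set.Icc 0 1) ≤ ENNReal.ofReal (A * dist (γ 0) (γ 1)) ∧
  ∀ t ∈ Set.Icc (0:ℝ) 1,
    min (eVariationOn γ (Set.Icc 0 t)) (eVariationOn γ (Set.Icc t 1))
      ≤ ENNReal.ofReal (A * Metric.infDist (γ t) (frontier Ω))

/-- An `A`-uniform domain in the plane. -/
def IsUniformDomain (A : ℝ) (Ω : Set ℂ) : Prop :=
  IsOpen Ω ∧ IsConnected Ω ∧
  ∀ a ∈ Ω, ∀ b ∈ Ω, ∃ γ : ℝ → ℂ, IsUniformCurve A Ω γ ∧ γ 0 = a ∧ γ 1 = b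
/-- The diameter `A`-cigar of a curve `γ : [0,1] → ℂ`. -/
def diamCigar (A : ℝ) (γ : ℝ → ℂ) : Set ℂ :=
  ⋃ t ∈ Set.Icc (0:ℝ) 1, EMetric.ball (γ t)
    ((ENNReal.ofReal A)⁻¹ *
      min (EMetric.diam (γ '' Set.Icc 0 t)) (EMetric.diam (γ '' Set.Icc t 1)))

/-- The length `A`-cigar of a curve `γ : [0,1] → ℂ`. -/
def lenCigar (A : ℝ) (γ : ℝ → ℂ) : Set ℂ :=
  ⋃ t ∈ Set.Icc (0:ℝ) 1, EMetric.ball (γ t)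
    ((ENNReal.ofReal A)⁻¹ *
      min (eVariationOn γ (Set.Icc 0 t)) (eVariationOn γ (Set.Icc t 1)))

/-- Concatenation at parameter `1/2` of two curves parametrized on `[0,1]`. -/
def concatAt (γ₁ γ₂ : ℝ → ℂ) : ℝ → ℂ := fun t => if t ≤ 1/2 then γ₁ (2*t) else γ₂ (2*t - 1)

/-!
Let `t` be a parameter of the concatenation `γ` lying on `γ₁`, and let `r` be the radius of the
ball about `γ(t)` in the `(2A+1)A`-cigar. The piece of `γ` before `t` is a piece of `γ₁`, while the
piece after `t` is bounded by the rest `d'` of `γ₁` plus all of `γ₂`. If `A r ≤ d'`, the ball lies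
in the `A`-cigar of `γ₁`. Otherwise `γ(t)` is within `d' < A r` of `x₀`, so the ball lies within
`d' + r ≤ 2 A r` of `x₀`, and the constant `(2A+1)A` is what makes
`2 A r ≤ A⁻¹ min {d(γ₁), d(γ₂)} ≤ dist(x₀, ∂D)`. The argument uses only monotonicity,
subadditivity and reparametrization invariance of `d`, so it applies verbatim to length.
-/

lemma mul_le_min_or_mul_add_le_min {a r d d' D' M M' : ℝ≥0∞} (ha : 1 ≤ a)
    (hd : (2*a+1)*a*r ≤ d) (hD' : (2*a+1)*a*r ≤ D') (hdM : d ≤ M) (hD'M : D' ≤ d' + M') :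
    a*r ≤ min d d' ∨ a*(d' + r) ≤ min M M' := by
  have hsplit : (2*a+1)*a*r = 2*a*(a*r) + a*r := by ring
  by_cases h : a*r ≤ d'
  · exact Or.inl (le_min ((le_add_self.trans_eq hsplit.symm).trans hd) h)
  push Not at h
  have hM : 2*a*(a*r) ≤ M := le_self_add.trans (hsplit ▸ hd.trans hdM)
  have hM' : 2*a*(a*r) ≤ M' := by
    by_contra! hlt
    have hsum : 2*a*(a*r) + a*r ≤ d' + M' := (hsplit ▸ hD').trans hD'M
    exact (ENNReal.add_lt_add h hlt).not_ge (hsum.trans_eq' (add_comm _ _))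
  refine Or.inr ?_
  calc a*(d' + r) ≤ a*(a*r + a*r) := by gcongr; exact le_mul_of_one_le_left' ha
    _ = 2*a*(a*r) := by ring
    _ ≤ min M M' := le_min hM hM'

lemma eball_infDist_frontier_subset {E : Type*} [NormedAddCommGroup E] [NormedSpace ℝ E]
    [FiniteDimensional ℝ E] {D : Set E} {x : E} (hx : x ∈ D) :
    Metric.eball x (ENNReal.ofReal (Metric.infDist x (frontier D))) ⊆ D := by
  rw [Metric.eball_ofReal]
  rcases eq_or_ne D univ with rfl | hD
  · exact subset_univ _
  obtain ⟨z, hz, hxz⟩ := exists_mem_frontier_infDist_compl_eq_dist hx hD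
  exact (Metric.ball_subset_ball (hxz ▸ Metric.infDist_le_dist_of_mem hz)).trans
    Metric.ball_infDist_compl_subset

lemma eball_subset_of_cigar_eball_subset {D : Set ℂ} {A : ℝ} (hA : 1 ≤ A) {x₀ p : ℂ}
    (hx₀ : x₀ ∈ D) {d d' D' M M' : ℝ≥0∞} (hdM : d ≤ M) (hD'M : D' ≤ d' + M') (hp : edist p x₀ ≤ d')
    (hball : Metric.eball p ((ENNReal.ofReal A)⁻¹ * min d d') ⊆ D)
    (hx₀D : (ENNReal.ofReal A)⁻¹ * min M M' ≤ ENNReal.ofReal (Metric.infDist x₀ (frontier D))) :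
    Metric.eball p ((ENNReal.ofReal ((2*A+1)*A))⁻¹ * min d D') ⊆ D := by
  set a := ENNReal.ofReal A
  have ha : 1 ≤ a := ENNReal.one_le_ofReal.2 hA
  have ha0 : a ≠ 0 := (zero_lt_one.trans_le ha).ne'
  have haT : a ≠ ∞ := ENNReal.ofReal_ne_top
  have hB : ENNReal.ofReal ((2*A+1)*A) = (2*a+1)*a := by
    rw [ENNReal.ofReal_mul (by linarith), ENNReal.ofReal_add (by linarith) zero_le_one,
      ENNReal.ofReal_mul zero_le_two, ENNReal.ofReal_one, ENNReal.ofReal_ofNat]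
  have hB0 : (2*a+1)*a ≠ 0 := mul_ne_zero (by simp) ha0
  have hBT : (2*a+1)*a ≠ ∞ := by finiteness
  set r := ((2*a+1)*a)⁻¹ * min d D'
  have hr : (2*a+1)*a*r = min d D' := ENNReal.mul_inv_cancel_left hB0 hBT
  have le_inv_mul : ∀ u x, a*u ≤ x → u ≤ a⁻¹ * x := fun u x h =>
    (ENNReal.inv_mul_cancel_left ha0 haT).symm.trans_le (by gcongr)
  rw [hB]
  rcases mul_le_min_or_mul_add_le_min ha (hr ▸ min_le_left _ _) (hr ▸ min_le_right _ _) hdM hD'M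
    with h | h
  · exact (Metric.eball_subset_eball (le_inv_mul _ _ h)).trans hball
  intro y hy
  have hfar : d' + r ≤ ENNReal.ofReal (Metric.infDist x₀ (frontier D)) :=
    (le_inv_mul _ _ h).trans hx₀D
  have hd'T : d' ≠ ∞ := ne_top_of_le_ne_top ENNReal.ofReal_ne_top (le_self_add.trans hfar)
  apply eball_infDist_frontier_subset hx₀
  calc edist y x₀ ≤ edist p x₀ + edist y p := (edist_triangle y p x₀).trans_eq (add_comm _ _)
    _ < d' + r := ENNReal.add_lt_add_of_le_of_lt (ne_top_of_le_ne_top hd'T hp) hp hy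
    _ ≤ _ := hfar

/-- The common properties of the diameter of the image and of the length of a piece of a curve. -/
structure CurveGauge (E : Type*) [PseudoEMetricSpace E] where
  toFun : (ℝ → E) → Set ℝ → ℝ≥0∞
  mono (γ : ℝ → E) {s t : Set ℝ} : s ⊆ t → toFun γ s ≤ toFun γ t
  edist_le (γ : ℝ → E) {s : Set ℝ} {a b : ℝ} : a ∈ s → b ∈ s → edist (γ a) (γ b) ≤ toFun γ s
  congr {γ γ' : ℝ → E} {s : Set ℝ} : EqOn γ γ' s → toFun γ s = toFun γ' s
  comp_eq_of_monotoneOn (γ : ℝ → E) {f : ℝ → ℝ} {s : Set ℝ} :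
    MonotoneOn f s → toFun (γ ∘ f) s = toFun γ (f '' s)
  Icc_le_add (γ : ℝ → E) {a b c : ℝ} :
    a ≤ b → b ≤ c → toFun γ (Icc a c) ≤ toFun γ (Icc a b) + toFun γ (Icc b c)

namespace CurveGauge

variable {E : Type*} [PseudoEMetricSpace E]

instance : CoeFun (CurveGauge E) fun _ => (ℝ → E) → Set ℝ → ℝ≥0∞ := ⟨toFun⟩

variable (E) in
def diam : CurveGauge E where
  toFun γ s := Metric.ediam (γ '' s)
  mono _ _ _ h := Metric.ediam_mono (image_mono h)
  edist_le _ _ _ _ ha hb :=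
    Metric.edist_le_ediam_of_mem (mem_image_of_mem _ ha) (mem_image_of_mem _ hb)
  congr h := by rw [image_congr h]
  comp_eq_of_monotoneOn _ _ _ _ := by rw [image_comp]
  Icc_le_add γ a b c hab hbc := by
    rw [← Icc_union_Icc_eq_Icc hab hbc, image_union]
    exact Metric.ediam_union_le ⟨γ b, mem_image_of_mem _ ⟨hab, le_rfl⟩,
      mem_image_of_mem _ ⟨le_rfl, hbc⟩⟩

variable (E) in
def length : CurveGauge E where
  toFun := eVariationOn
  mono γ _ _ h := eVariationOn.mono γ h
  edist_le γ _ _ _ ha hb := eVariationOn.edist_le γ ha hb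
  congr h := eVariationOn.eq_of_eqOn h
  comp_eq_of_monotoneOn γ f _ hf := eVariationOn.comp_eq_of_monotoneOn γ f hf
  Icc_le_add γ _ b _ hab hbc := by
    simpa using (eVariationOn.Icc_add_Icc γ hab hbc (mem_univ b)).ge

def cigar (g : CurveGauge E) (A : ℝ) (γ : ℝ → E) : Set E :=
  ⋃ t ∈ Icc (0:ℝ) 1, Metric.eball (γ t)
    ((ENNReal.ofReal A)⁻¹ * min (g γ (Icc 0 t)) (g γ (Icc t 1)))

section Concat

variable (g : CurveGauge ℂ) (γ₁ γ₂ : ℝ → ℂ)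

lemma concatAt_Icc_of_le_half {a b : ℝ} (hb : b ≤ 1/2) :
    g (concatAt γ₁ γ₂) (Icc a b) = g γ₁ (Icc (2*a) (2*b)) := by
  have hEq : EqOn (concatAt γ₁ γ₂) (γ₁ ∘ (2 * ·)) (Icc a b) := fun u hu =>
    if_pos (hu.2.trans hb)
  rw [g.congr hEq, g.comp_eq_of_monotoneOn _ fun x _ y _ h => by linarith,
    image_mul_left_Icc' two_pos]

lemma concatAt_Icc_of_half_le (he : γ₁ 1 = γ₂ 0) {a b : ℝ} (ha : 1/2 ≤ a) :
    g (concatAt γ₁ γ₂) (Icc a b) = g γ₂ (Icc (2*a - 1) (2*b - 1)) := by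
  have hEq : EqOn (concatAt γ₁ γ₂) (γ₂ ∘ fun u => 2*u + -1) (Icc a b) := fun u hu => by
    rcases (ha.trans hu.1).eq_or_lt with rfl | hu'
    · norm_num [concatAt, he]
    · simp only [concatAt, Function.comp_apply, if_neg (not_le.2 hu'), sub_eq_add_neg]
  rw [g.congr hEq, g.comp_eq_of_monotoneOn _ fun x _ y _ h => by linarith,
    image_affine_Icc' two_pos, ← sub_eq_add_neg, ← sub_eq_add_neg]

lemma concatAt_Icc_one_le (he : γ₁ 1 = γ₂ 0) {t : ℝ} (ht : t ≤ 1/2) :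
    g (concatAt γ₁ γ₂) (Icc t 1) ≤ g γ₁ (Icc (2*t) 1) + g γ₂ (Icc 0 1) := by
  calc g (concatAt γ₁ γ₂) (Icc t 1)
      ≤ g (concatAt γ₁ γ₂) (Icc t (1/2)) + g (concatAt γ₁ γ₂) (Icc (1/2) 1) :=
        g.Icc_le_add _ ht (by norm_num)
    _ = g γ₁ (Icc (2*t) 1) + g γ₂ (Icc 0 1) := by
        rw [g.concatAt_Icc_of_le_half _ _ le_rfl, g.concatAt_Icc_of_half_le _ _ he le_rfl]
        norm_num

lemma concatAt_Icc_zero_le (he : γ₁ 1 = γ₂ 0) {t : ℝ} (ht : 1/2 ≤ t) :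
    g (concatAt γ₁ γ₂) (Icc 0 t) ≤ g γ₁ (Icc 0 1) + g γ₂ (Icc 0 (2*t - 1)) := by
  calc g (concatAt γ₁ γ₂) (Icc 0 t)
      ≤ g (concatAt γ₁ γ₂) (Icc 0 (1/2)) + g (concatAt γ₁ γ₂) (Icc (1/2) t) :=
        g.Icc_le_add _ (by norm_num) ht
    _ = g γ₁ (Icc 0 1) + g γ₂ (Icc 0 (2*t - 1)) := by
        rw [g.concatAt_Icc_of_le_half _ _ le_rfl, g.concatAt_Icc_of_half_le _ _ he le_rfl]
        norm_num

end Concat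

section Cigar

variable (g : CurveGauge ℂ) {D : Set ℂ} {A : ℝ} (hA : 1 ≤ A) {γ₁ γ₂ : ℝ → ℂ} {x₀ : ℂ}
  (hx₀ : x₀ ∈ D) (he₁ : γ₁ 1 = x₀) (he₂ : γ₂ 0 = x₀)
  (hx₀D : (ENNReal.ofReal A)⁻¹ * min (g γ₁ (Icc 0 1)) (g γ₂ (Icc 0 1))
    ≤ ENNReal.ofReal (Metric.infDist x₀ (frontier D)))
include hA hx₀ he₁ he₂ hx₀D

lemma eball_concatAt_subset_of_le_half (h₁ : g.cigar A γ₁ ⊆ D) {t : ℝ}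
    (ht : t ∈ Icc 0 (1/2)) :
    Metric.eball (concatAt γ₁ γ₂ t) ((ENNReal.ofReal ((2*A+1)*A))⁻¹ *
      min (g (concatAt γ₁ γ₂) (Icc 0 t)) (g (concatAt γ₁ γ₂) (Icc t 1))) ⊆ D := by
  have hs : 2*t ∈ Icc (0:ℝ) 1 := ⟨by linarith [ht.1], by linarith [ht.2]⟩
  rw [show concatAt γ₁ γ₂ t = γ₁ (2*t) from if_pos ht.2, g.concatAt_Icc_of_le_half _ _ ht.2,
    mul_zero]
  exact eball_subset_of_cigar_eball_subset hA hx₀ (g.mono _ (Icc_subset_Icc le_rfl hs.2))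
    (g.concatAt_Icc_one_le _ _ (he₁.trans he₂.symm) ht.2)
    (he₁ ▸ g.edist_le _ ⟨le_rfl, hs.2⟩ ⟨hs.2, le_rfl⟩) (fun _ hz => h₁ (mem_biUnion hs hz))
    hx₀D

lemma eball_concatAt_subset_of_half_le (h₂ : g.cigar A γ₂ ⊆ D) {t : ℝ}
    (ht : t ∈ Icc (1/2) 1) :
    Metric.eball (concatAt γ₁ γ₂ t) ((ENNReal.ofReal ((2*A+1)*A))⁻¹ *
      min (g (concatAt γ₁ γ₂) (Icc 0 t)) (g (concatAt γ₁ γ₂) (Icc t 1))) ⊆ D := by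
  have hs : 2*t - 1 ∈ Icc (0:ℝ) 1 := ⟨by linarith [ht.1], by linarith [ht.2]⟩
  have hpt : concatAt γ₁ γ₂ t = γ₂ (2*t - 1) := by
    rcases ht.1.eq_or_lt with rfl | ht'
    · norm_num [concatAt, he₁, he₂]
    · exact if_neg (not_le.2 ht')
  rw [hpt, g.concatAt_Icc_of_half_le _ _ (he₁.trans he₂.symm) ht.1,
    show (2:ℝ)*1 - 1 = 1 by norm_num, min_comm]
  rw [min_comm] at hx₀D
  refine eball_subset_of_cigar_eball_subset hA hx₀ (g.mono _ (Icc_subset_Icc hs.1 le_rfl))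
    ((g.concatAt_Icc_zero_le _ _ (he₁.trans he₂.symm) ht.1).trans_eq (add_comm _ _))
    (he₂ ▸ g.edist_le _ ⟨hs.1, le_rfl⟩ ⟨le_rfl, hs.1⟩) (fun _ hz => h₂ ?_) hx₀D
  exact mem_biUnion hs (by rwa [min_comm])

theorem cigar_concatAt_subset (h₁ : g.cigar A γ₁ ⊆ D) (h₂ : g.cigar A γ₂ ⊆ D) :
    g.cigar ((2*A+1)*A) (concatAt γ₁ γ₂) ⊆ D := by
  intro y hy
  obtain ⟨t, ht, hy⟩ := mem_iUnion₂.1 hy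
  rcases le_total t (1/2) with h | h
  · exact g.eball_concatAt_subset_of_le_half hA hx₀ he₁ he₂ hx₀D h₁ ⟨ht.1, h⟩ hy
  · exact g.eball_concatAt_subset_of_half_le hA hx₀ he₁ he₂ hx₀D h₂ ⟨h, ht.2⟩ hy

end Cigar

end CurveGauge

theorem statement_4 (D : Set ℂ) (A : ℝ) (hA : 1 ≤ A)
    (γ₁ γ₂ : ℝ → ℂ)
    (hm₁ : Set.MapsTo γ₁ (Set.Icc 0 1) D)
    (x₀ : ℂ) (he₁ : γ₁ 1 = x₀) (he₂ : γ₂ 0 = x₀) :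
    (((ENNReal.ofReal A)⁻¹ *
        min (EMetric.diam (γ₁ '' Set.Icc 0 1)) (EMetric.diam (γ₂ '' Set.Icc 0 1))
          ≤ ENNReal.ofReal (Metric.infDist x₀ (frontier D))) →
      diamCigar A γ₁ ⊆ D → diamCigar A γ₂ ⊆ D →
      diamCigar ((2*A+1)*A) (concatAt γ₁ γ₂) ⊆ D) ∧
    (((ENNReal.ofReal A)⁻¹ *
        min (eVariationOn γ₁ (Set.Icc 0 1)) (eVariationOn γ₂ (Set.Icc 0 1))
          ≤ ENNReal.ofReal (Metric.infDist x₀ (frontier D))) →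
      lenCigar A γ₁ ⊆ D → lenCigar A γ₂ ⊆ D →
      lenCigar ((2*A+1)*A) (concatAt γ₁ γ₂) ⊆ D) := by
  have hx₀ : x₀ ∈ D := he₁ ▸ hm₁ ⟨zero_le_one, le_rfl⟩
  exact ⟨(CurveGauge.diam ℂ).cigar_concatAt_subset hA hx₀ he₁ he₂,
    (CurveGauge.length ℂ).cigar_concatAt_subset hA hx₀ he₁ he₂⟩
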